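/- arXiv:2407.14234 — 3 statements merged into one kernel-verified Lean document; each statement's English description precedes it below -/
import Mathlib

section
/- Natural operations on groups in one variable are represented by the integers: natural transformations from the forgetful functor U : Grp ⥤ Type to itself are in bijection with ℤ, with n corresponding to the operation x ↦ x^n. -/
/-!
Naturality of an operation `η` along the homomorphism `ℤ → G`, `k ↦ x ^ k`, which sends the
generator `1` to `x`, gives `η_G x = x ^ n` with `n = η_ℤ 1`. So `η ↦ η_ℤ 1` inverts
`n ↦ (x ↦ x ^ n)`.
-/

open CategoryTheory

/-- The natural transformation of the forgetful functor on groups given by `x ↦ x ^ n`. -/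
def zpowNatTrans (n : ℤ) : forget GrpCat.{u} ⟶ forget GrpCat.{u} where
  app := fun G => TypeCat.ofHom fun (x : G) => x ^ n
  naturality := fun G H f => by
    ext (x : G)
    simpa using map_zpow (show (G : Type u) →* (H : Type u) from f) x n

namespace GrpCat

abbrev intGrp : GrpCat.{u} := of (ULift.{u} (Multiplicative ℤ))

def intGrpGen : intGrp.{u} := ULift.up (Multiplicative.ofAdd 1)

def zpowersHom (G : GrpCat.{u}) (x : G) : intGrp.{u} ⟶ G :=
  ofHom ((_root_.zpowersHom G x).comp MulEquiv.ulift.toMonoidHom)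

lemma zpowersHom_apply (G : GrpCat.{u}) (x : G) (k : intGrp.{u}) :
    zpowersHom G x k = x ^ k.down.toAdd :=
  rfl

lemma zpowersHom_intGrpGen (G : GrpCat.{u}) (x : G) : zpowersHom G x intGrpGen = x :=
  zpow_one x

def natTransExponent (η : forget GrpCat.{u} ⟶ forget GrpCat.{u}) : ℤ :=
  (η.app intGrp intGrpGen).down.toAdd

lemma natTrans_app_eq_zpow_natTransExponent (η : forget GrpCat.{u} ⟶ forget GrpCat.{u})
    (G : GrpCat.{u}) (x : G) : η.app G x = x ^ natTransExponent η :=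
  calc η.app G x = η.app G (zpowersHom G x intGrpGen) := by rw [zpowersHom_intGrpGen]
    _ = zpowersHom G x (η.app intGrp intGrpGen) :=
      NatTrans.naturality_apply η (zpowersHom G x) intGrpGen
    _ = x ^ natTransExponent η := zpowersHom_apply G x _

lemma natTransExponent_zpowNatTrans (n : ℤ) : natTransExponent (zpowNatTrans.{u} n) = n := by
  show Multiplicative.toAdd (Multiplicative.ofAdd (1 : ℤ) ^ n) = n
  simp

lemma zpowNatTrans_natTransExponent (η : forget GrpCat.{u} ⟶ forget GrpCat.{u}) :
    zpowNatTrans (natTransExponent η) = η := by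
  ext G x
  exact (natTrans_app_eq_zpow_natTransExponent η G x).symm

end GrpCat

theorem natural_operations_eq_int :
    Function.Bijective (zpowNatTrans : ℤ → (forget GrpCat.{0} ⟶ forget GrpCat.{0})) :=
  Function.bijective_iff_has_inverse.mpr
    ⟨GrpCat.natTransExponent, GrpCat.natTransExponent_zpowNatTrans,
      GrpCat.zpowNatTrans_natTransExponent⟩
end

section
/- Closed 1-forms on a real vector space are exact (Poincaré lemma in degree 1, star-shaped case): if ω : ℝⁿ → (ℝⁿ →L[ℝ] ℝ) is a C¹ map of linear functionals such that its derivative is symmetric (∂_i ω_j = ∂_j ω_i everywhere), then there exists f : ℝⁿ → ℝ differentiable with fderiv ℝ f x = ω x for all x; one may take f(x) = ∫_0^1 ω(t x)(x) dt. -/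
theorem poincare_lemma_degree_one {n : ℕ}
    (ω : (Fin n → ℝ) → ((Fin n → ℝ) →L[ℝ] ℝ))
    (hω : ContDiff ℝ 1 ω)
    (hclosed : ∀ (x u v : Fin n → ℝ), fderiv ℝ ω x u v = fderiv ℝ ω x v u) :
    ∃ f : (Fin n → ℝ) → ℝ, ∀ x, HasFDerivAt f (ω x) x := by
  obtain ⟨f, hf⟩ := convex_univ.exists_forall_hasFDerivAt_of_fderiv_symmetric isOpen_univ
    (hω.differentiable one_ne_zero).differentiableOn fun x _ ↦ hclosed x
  exact ⟨f, fun x ↦ hf x (Set.mem_univ x)⟩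
end

section
/- Fullness criterion in the gauge category over the identity diffeomorphism: working on ℝⁿ, if A and A' are differentiable vector fields with equal field strengths (∂_μ A'_ν − ∂_ν A'_μ = ∂_μ A_ν − ∂_ν A_μ everywhere), then there exists a scalar function s : ℝⁿ → ℝ with A'_μ = A_μ + ∂_μ s, i.e., A and A' are gauge related. -/
/-!
`A' - A` is a closed 1-form on the convex set `ℝⁿ`: identifying a covector field with a field of
continuous linear functionals, closedness in coordinates is symmetry of its derivative on basis
vectors, hence symmetry outright. The Poincaré lemma for convex sets then provides a primitive
`s` of `A' - A`.
-/

theorem ContinuousLinearMap.apply_comm_of_apply_single_comm {ι : Type*} [Fintype ι]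
    [DecidableEq ι] (T : (ι → ℝ) →L[ℝ] (ι → ℝ) →L[ℝ] ℝ)
    (hT : ∀ i j, T (Pi.single i 1) (Pi.single j 1) = T (Pi.single j 1) (Pi.single i 1))
    (x y : ι → ℝ) : T x y = T y x := by
  have hflip : T.flip = T := by
    refine (ContinuousLinearEquiv.piRing ι).injective (funext fun i ↦ ?_)
    refine (ContinuousLinearEquiv.piRing ι).injective (funext fun j ↦ ?_)
    exact hT j i
  exact congr($hflip y x)

theorem exists_fderiv_single_eq_of_fderiv_single_symm {ι : Type*} [Fintype ι] [DecidableEq ι]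
    {B : (ι → ℝ) → ι → ℝ} (hB : Differentiable ℝ B)
    (hclosed : ∀ μ ν x, fderiv ℝ (fun y ↦ B y ν) x (Pi.single μ 1)
      = fderiv ℝ (fun y ↦ B y μ) x (Pi.single ν 1)) :
    ∃ s : (ι → ℝ) → ℝ, Differentiable ℝ s ∧ ∀ x μ, fderiv ℝ s x (Pi.single μ 1) = B x μ := by
  set e := (ContinuousLinearEquiv.piRing (𝕜 := ℝ) (E := ℝ) ι).symm
  have he : ∀ b μ, e b (Pi.single μ 1) = b μ := fun b μ ↦
    congr_fun ((ContinuousLinearEquiv.piRing ι).apply_symm_apply b) μ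
  have hω : Differentiable ℝ (fun x ↦ e (B x)) := e.differentiable.comp hB
  have hsymm : ∀ a x y, fderiv ℝ (fun x ↦ e (B x)) a x y = fderiv ℝ (fun x ↦ e (B x)) a y x := by
    intro a
    refine ContinuousLinearMap.apply_comm_of_apply_single_comm _ fun i j ↦ ?_
    have hd : fderiv ℝ (fun x ↦ e (B x)) a = (e : _ →L[ℝ] _).comp (fderiv ℝ B a) :=
      (e.hasFDerivAt.comp a (hB a).hasFDerivAt).fderiv
    simp only [hd, ContinuousLinearMap.comp_apply, ContinuousLinearEquiv.coe_coe, he]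
    simpa only [fderiv_apply (hB a), ContinuousLinearMap.comp_apply,
      ContinuousLinearMap.proj_apply] using hclosed i j a
  obtain ⟨s, hs⟩ := convex_univ.exists_forall_hasFDerivAt_of_fderiv_symmetric isOpen_univ
    hω.differentiableOn fun a _ ↦ hsymm a
  refine ⟨s, fun x ↦ (hs x trivial).differentiableAt, fun x μ ↦ ?_⟩
  rw [(hs x trivial).fderiv, he]

theorem gauge_fullness {n : ℕ}
    (A A' : (Fin n → ℝ) → (Fin n → ℝ))
    (hA : ContDiff ℝ 1 A) (hA' : ContDiff ℝ 1 A')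
    (hF : ∀ (μ ν : Fin n) (x : Fin n → ℝ),
      fderiv ℝ (fun y => A' y ν) x (Pi.single μ 1)
        - fderiv ℝ (fun y => A' y μ) x (Pi.single ν 1)
      = fderiv ℝ (fun y => A y ν) x (Pi.single μ 1)
        - fderiv ℝ (fun y => A y μ) x (Pi.single ν 1)) :
    ∃ s : (Fin n → ℝ) → ℝ, Differentiable ℝ s ∧
      ∀ (x : Fin n → ℝ) (μ : Fin n),
        A' x μ = A x μ + fderiv ℝ s x (Pi.single μ 1) := by
  have hAd := hA.differentiable one_ne_zero
  have hA'd := hA'.differentiable one_ne_zero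
  have hclosed : ∀ μ ν x, fderiv ℝ (fun y ↦ (A' - A) y ν) x (Pi.single μ 1)
      = fderiv ℝ (fun y ↦ (A' - A) y μ) x (Pi.single ν 1) := by
    intro μ ν x
    simp only [Pi.sub_apply]
    rw [fderiv_fun_sub (by fun_prop) (by fun_prop), fderiv_fun_sub (by fun_prop) (by fun_prop)]
    simp only [sub_apply]
    linarith [hF μ ν x]
  obtain ⟨s, hs, hds⟩ := exists_fderiv_single_eq_of_fderiv_single_symm (hA'd.sub hAd) hclosed
  exact ⟨s, hs, fun x μ ↦ by rw [hds, Pi.sub_apply, Pi.sub_apply]; ring⟩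
end
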